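/- arXiv:math/0011189 — 10 statements merged into one kernel-verified Lean document; each statement's English description precedes it below -/
import Mathlib

section
/- Let h, k be coprime positive integers. For every point (x,y) ∈ ℂ² with x^(h+k) ≠ y^(hk), the fiber of F_{h,k} over (x,y), i.e. the set {(z,w) ∈ ℂ² : h·z^k + k·w^h = (h+k)·x and z·w = y}, is finite and has exactly h+k elements. -/
/-!
Off the branch curve the fiber is parametrised by its `z`-coordinate. If `y ≠ 0`, then `w = y / z`
and, after multiplying the first equation by `z ^ h`, the `z`-coordinates are exactly the roots of
`P = h X^(h+k) - (h+k) x X^h + k y^h`, whose derivative is `h (h+k) X^(h-1) (X^k - x)`. A common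
root `a` of `P` and `P'` would satisfy `a^k = x` and `y^h = x a^h`, hence `x^(h+k) = y^(hk)`; so `P`
is separable and has `h + k` distinct roots. If `y = 0`, the fiber consists of the `k` points
`(z, 0)` with `h z^k = (h+k) x` and the `h` points `(0, w)` with `k w^h = (h+k) x`.
-/

open Polynomial

variable {K : Type*} [Field K]

namespace Polynomial

theorem separable_of_forall_isRoot_eval_derivative_ne_zero [IsAlgClosed K] {p : K[X]}
    (hp : ∀ a, p.IsRoot a → p.derivative.eval a ≠ 0) : p.Separable :=
  (isCoprime_iff_aeval_ne_zero_of_isAlgClosed K K p _).2 fun a => by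
    simpa only [coe_aeval_eq_eval, or_iff_not_imp_left, not_not, IsRoot.def] using hp a

theorem Separable.ncard_setOf_isRoot [IsAlgClosed K] {p : K[X]} (hp : p.Separable) :
    {z | p.IsRoot z}.ncard = p.natDegree := by
  classical
  have hroots : {z | p.IsRoot z} = p.rootSet K := by
    ext z
    simp [mem_rootSet, hp.ne_zero]
  rw [hroots, ← Nat.card_coe_set_eq, Nat.card_eq_fintype_card,
    card_rootSet_eq_natDegree hp (IsAlgClosed.splits _)]

end Polynomial

theorem setOf_mul_pow_eq_finite_and_ncard [IsAlgClosed K] [CharZero K] {c d : K} (hc : c ≠ 0)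
    (hd : d ≠ 0) {n : ℕ} (hn : 0 < n) :
    {z : K | c * z ^ n = d}.Finite ∧ {z : K | c * z ^ n = d}.ncard = n := by
  have hsep : (X ^ n - C (d / c)).Separable :=
    separable_X_pow_sub_C _ (Nat.cast_ne_zero.2 hn.ne') (div_ne_zero hd hc)
  have hroots : {z : K | c * z ^ n = d} = {z | (X ^ n - C (d / c)).IsRoot z} := by
    ext z
    simp [sub_eq_zero, eq_div_iff hc, mul_comm c]
  rw [hroots, hsep.ncard_setOf_isRoot, natDegree_X_pow_sub_C]
  exact ⟨finite_setOfPred_isRoot hsep.ne_zero, rfl⟩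

variable (h k : ℕ) (x y : K)

def fiber : Set (K × K) :=
  {p | (h : K) * p.1 ^ k + (k : K) * p.2 ^ h = ((h : K) + (k : K)) * x ∧ p.1 * p.2 = y}

noncomputable def fiberPoly : K[X] :=
  C (h : K) * X ^ (h + k) - C (((h : K) + k) * x) * X ^ h + C ((k : K) * y ^ h)

variable {h k x y}

@[simp]
theorem eval_fiberPoly (z : K) :
    (fiberPoly h k x y).eval z = h * z ^ (h + k) - (h + k) * x * z ^ h + k * y ^ h := by
  simp [fiberPoly]

theorem eval_derivative_fiberPoly (hh : 0 < h) (z : K) :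
    (fiberPoly h k x y).derivative.eval z = h * (h + k) * (z ^ (h - 1) * (z ^ k - x)) := by
  obtain ⟨h, rfl⟩ := Nat.exists_eq_add_of_lt hh
  simp only [fiberPoly, derivative_add, derivative_sub, derivative_C, derivative_C_mul_X_pow,
    add_zero, eval_sub, eval_mul, eval_C, eval_pow, eval_X, Nat.cast_add, Nat.cast_one,
    add_tsub_cancel_right, Nat.add_right_comm _ 1 k]
  ring

theorem natDegree_fiberPoly [CharZero K] (hh : 0 < h) (hk : 0 < k) :
    (fiberPoly h k x y).natDegree = h + k := by
  unfold fiberPoly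
  compute_degree!
  simp [hh.ne', hk.ne']

theorem ne_zero_of_isRoot_fiberPoly [CharZero K] (hh : 0 < h) (hk : 0 < k) (hy : y ≠ 0) {a : K}
    (ha : (fiberPoly h k x y).IsRoot a) : a ≠ 0 := by
  rintro rfl
  simp [IsRoot, zero_pow (show h + k ≠ 0 by omega), zero_pow hh.ne', hk.ne', hy] at ha

theorem separable_fiberPoly [IsAlgClosed K] [CharZero K] (hh : 0 < h) (hk : 0 < k) (hy : y ≠ 0)
    (hxy : x ^ (h + k) ≠ y ^ (h * k)) : (fiberPoly h k x y).Separable := by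
  refine separable_of_forall_isRoot_eval_derivative_ne_zero fun a ha hda => hxy ?_
  have ha0 := ne_zero_of_isRoot_fiberPoly hh hk hy ha
  have hax : a ^ k = x := by
    have hhk : (h : K) + k ≠ 0 := by norm_cast; omega
    simpa [eval_derivative_fiberPoly hh, hh.ne', sub_eq_zero, ha0, hhk] using hda
  have hyx : y ^ h = x * a ^ h := by
    have := ha.eq_zero
    rw [eval_fiberPoly, pow_add, hax] at this
    exact mul_left_cancel₀ (Nat.cast_ne_zero.2 hk.ne') (by linear_combination this)
  calc x ^ (h + k) = (a ^ k) ^ h * x ^ k := by rw [pow_add, hax]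
    _ = (y ^ h) ^ k := by rw [hyx]; ring
    _ = y ^ (h * k) := (pow_mul _ _ _).symm

theorem fiber_eq_image_setOf_isRoot [CharZero K] (hh : 0 < h) (hk : 0 < k) (hy : y ≠ 0) :
    fiber h k x y = (fun z => (z, y / z)) '' {z | (fiberPoly h k x y).IsRoot z} := by
  ext ⟨z, w⟩
  simp only [fiber, Set.mem_ofPred_eq, Set.mem_image, Prod.mk.injEq]
  constructor
  · rintro ⟨hzw, rfl⟩
    have hz : z ≠ 0 := by rintro rfl; simp at hy
    refine ⟨z, ?_, rfl, by field_simp⟩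
    simp only [IsRoot, eval_fiberPoly, mul_pow, pow_add]
    linear_combination z ^ h * hzw
  · rintro ⟨a, ha, rfl, rfl⟩
    have ha0 := ne_zero_of_isRoot_fiberPoly hh hk hy ha
    refine ⟨?_, by field_simp⟩
    have := ha.eq_zero
    rw [eval_fiberPoly, pow_add] at this
    rw [div_pow]
    field_simp
    linear_combination this

theorem fiber_zero_eq (hh : 0 < h) (hk : 0 < k) :
    fiber h k x 0 = (fun z => (z, 0)) '' {z | (h : K) * z ^ k = (h + k) * x} ∪
      (fun w => (0, w)) '' {w | (k : K) * w ^ h = (h + k) * x} := by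
  ext ⟨z, w⟩
  simp only [fiber, Set.mem_ofPred_eq, Set.mem_union, Set.mem_image, Prod.mk.injEq, mul_eq_zero]
  constructor
  · rintro ⟨hzw, rfl | rfl⟩
    · exact .inr ⟨w, by simpa [hk.ne'] using hzw, rfl, rfl⟩
    · exact .inl ⟨z, by simpa [hh.ne'] using hzw, rfl, rfl⟩
  · rintro (⟨a, ha, rfl, rfl⟩ | ⟨a, ha, rfl, rfl⟩)
    · simpa [hh.ne'] using ha
    · simpa [hk.ne'] using ha

theorem fiber_zero_finite_and_ncard [IsAlgClosed K] [CharZero K] (hh : 0 < h) (hk : 0 < k)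
    (hx : x ≠ 0) : (fiber h k x 0).Finite ∧ (fiber h k x 0).ncard = h + k := by
  have hc : ((h : K) + k) * x ≠ 0 := mul_ne_zero (by norm_cast; omega) hx
  obtain ⟨hzfin, hzcard⟩ := setOf_mul_pow_eq_finite_and_ncard (Nat.cast_ne_zero.2 hh.ne') hc hk
  obtain ⟨hwfin, hwcard⟩ := setOf_mul_pow_eq_finite_and_ncard (Nat.cast_ne_zero.2 hk.ne') hc hh
  have hdisj : Disjoint ((fun z => (z, 0)) '' {z | (h : K) * z ^ k = (h + k) * x})
      ((fun w => (0, w)) '' {w | (k : K) * w ^ h = (h + k) * x}) := by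
    refine Set.disjoint_left.2 ?_
    rintro _ ⟨z, hz, rfl⟩ ⟨w, -, hwz⟩
    obtain rfl : 0 = z := congrArg Prod.fst hwz
    exact hc (by simpa [hk.ne', eq_comm] using hz)
  rw [fiber_zero_eq hh hk]
  refine ⟨(hzfin.image _).union (hwfin.image _), ?_⟩
  rw [Set.ncard_union_eq hdisj (hzfin.image _) (hwfin.image _),
    Set.ncard_image_of_injective _ (Prod.mk_left_injective 0),
    Set.ncard_image_of_injective _ (Prod.mk_right_injective 0), hzcard, hwcard, add_comm]

theorem fiber_finite_and_ncard_of_ne_zero [IsAlgClosed K] [CharZero K] (hh : 0 < h) (hk : 0 < k)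
    (hy : y ≠ 0) (hxy : x ^ (h + k) ≠ y ^ (h * k)) :
    (fiber h k x y).Finite ∧ (fiber h k x y).ncard = h + k := by
  have hsep := separable_fiberPoly hh hk hy hxy
  rw [fiber_eq_image_setOf_isRoot hh hk hy]
  refine ⟨(finite_setOfPred_isRoot hsep.ne_zero).image _, ?_⟩
  rw [Set.ncard_image_of_injective _ fun a b hab => congrArg Prod.fst hab, hsep.ncard_setOf_isRoot,
    natDegree_fiberPoly hh hk]

theorem stmt_0_general (h k : ℕ) (hh : 0 < h) (hk : 0 < k)
    (x y : ℂ) (hxy : x ^ (h + k) ≠ y ^ (h * k)) :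
    {p : ℂ × ℂ | (h : ℂ) * p.1 ^ k + (k : ℂ) * p.2 ^ h = ((h : ℂ) + (k : ℂ)) * x ∧
        p.1 * p.2 = y}.Finite ∧
    {p : ℂ × ℂ | (h : ℂ) * p.1 ^ k + (k : ℂ) * p.2 ^ h = ((h : ℂ) + (k : ℂ)) * x ∧
        p.1 * p.2 = y}.ncard = h + k := by
  rcases eq_or_ne y 0 with rfl | hy
  · refine fiber_zero_finite_and_ncard hh hk ?_
    rintro rfl
    simp [hh.ne', hk.ne'] at hxy
  · exact fiber_finite_and_ncard_of_ne_zero hh hk hy hxy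

/-- For coprime positive integers `h, k`, the fiber of the projection
`F_{h,k} : S_{h,k} → ℂ²` over a point `(x, y)` off the branch curve
`x^(h+k) = y^(hk)` is finite with exactly `h + k` elements. -/
theorem stmt_0 (h k : ℕ) (hh : 0 < h) (hk : 0 < k) (hcop : Nat.Coprime h k)
    (x y : ℂ) (hxy : x ^ (h + k) ≠ y ^ (h * k)) :
    {p : ℂ × ℂ | (h : ℂ) * p.1 ^ k + (k : ℂ) * p.2 ^ h = ((h : ℂ) + (k : ℂ)) * x ∧
        p.1 * p.2 = y}.Finite ∧
    {p : ℂ × ℂ | (h : ℂ) * p.1 ^ k + (k : ℂ) * p.2 ^ h = ((h : ℂ) + (k : ℂ)) * x ∧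
        p.1 * p.2 = y}.ncard = h + k :=
  stmt_0_general h k hh hk x y hxy
end

section
/- Let h, k be coprime positive integers and let P(z) = (h·z+k)^(h+k) − (h+k)^(h+k)·z^h ∈ ℂ[z]. Then z = 1 is a root of P of multiplicity exactly 2, every other complex root of P is a simple root, and consequently P has exactly h+k−1 distinct complex roots. -/
open Polynomial

/-- For coprime positive integers `h, k`, the polynomial
`P(z) = (h·z + k)^(h+k) − (h+k)^(h+k)·z^h` has `z = 1` as a root of multiplicity
exactly `2`, every other root is simple, and `P` has exactly `h + k − 1`
distinct complex roots. -/
theorem stmt_2 (h k : ℕ) (hh : 0 < h) (hk : 0 < k) (hcop : Nat.Coprime h k)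
    (P : Polynomial ℂ)
    (hP : P = (Polynomial.C (h : ℂ) * Polynomial.X + Polynomial.C (k : ℂ)) ^ (h + k)
        - Polynomial.C (((h : ℂ) + (k : ℂ)) ^ (h + k)) * Polynomial.X ^ h) :
    Polynomial.rootMultiplicity (1 : ℂ) P = 2 ∧
    (∀ z : ℂ, z ≠ 1 → P.IsRoot z → Polynomial.rootMultiplicity z P = 1) ∧
    P.roots.toFinset.card = h + k - 1 := by
  classical
  set n := h + k with hn
  have hn2 : 2 ≤ n := by omega
  set a : ℂ := (h : ℂ) with ha
  set b : ℂ := (k : ℂ) with hb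
  have ha0 : a ≠ 0 := Nat.cast_ne_zero.mpr hh.ne'
  have hb0 : b ≠ 0 := Nat.cast_ne_zero.mpr hk.ne'
  have hab0 : a + b ≠ 0 := by
    have h1 : ((n : ℕ) : ℂ) ≠ 0 := Nat.cast_ne_zero.mpr (by omega)
    simpa [hn, ha, hb] using h1
  have en : ((n : ℕ) : ℂ) = a + b := by rw [hn]; push_cast; ring
  have en1 : ((n - 1 : ℕ) : ℂ) = a + b - 1 := by
    rw [Nat.cast_sub (by omega), en]; norm_num
  have eh1 : ((h - 1 : ℕ) : ℂ) = a - 1 := by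
    rw [Nat.cast_sub hh, ha]; norm_num
  have pab : (a + b) ^ n = (a + b) ^ (n - 1) * (a + b) := by
    rw [← pow_succ]; congr 1; omega
  -- eval of P
  have hevalP : ∀ z : ℂ, P.eval z = (a * z + b) ^ n - (a + b) ^ n * z ^ h := by
    intro z; simp [hP]
  -- closed form of derivative
  have hD : derivative P
      = C ((n : ℕ) : ℂ) * (C a * X + C b) ^ (n - 1) * C a
        - C ((a + b) ^ n) * (C ((h : ℕ) : ℂ) * X ^ (h - 1)) := by
    rw [hP]
    simp only [derivative_sub, derivative_pow, derivative_add, derivative_mul, derivative_C,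
      derivative_X, derivative_X_pow, zero_mul, zero_add, mul_zero, add_zero, mul_one]
  have hevalD : ∀ z : ℂ,
      (derivative P).eval z
        = (a + b) * a * (a * z + b) ^ (n - 1) - (a + b) ^ n * a * z ^ (h - 1) := by
    intro z
    rw [hD]
    simp only [eval_sub, eval_mul, eval_pow, eval_add, eval_C, eval_X]
    rw [en, ← ha]
    ring
  -- eval of second derivative at 1
  have hDD1 : (derivative (derivative P)).eval 1 = (a + b) ^ (n - 2) * a * (a + b) * b := by
    rw [hD]
    simp only [derivative_sub, derivative_mul, derivative_pow, derivative_add, derivative_C,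
      derivative_X, derivative_X_pow, zero_mul, zero_add, mul_zero, add_zero, mul_one,
      eval_sub, eval_mul, eval_pow, eval_add, eval_C, eval_X, eval_one, one_pow]
    have h1 : n - 1 - 1 = n - 2 := by omega
    have h2 : (a + b) ^ n = (a + b) ^ (n - 2) * (a + b) ^ 2 := by
      rw [← pow_add]; congr 1; omega
    rw [h1, en, en1, eh1, h2, ← ha]
    ring
  -- P ≠ 0
  have hP0 : P ≠ 0 := by
    intro h0
    have h1 := hevalP 0
    rw [h0] at h1
    simp only [eval_zero, mul_zero, zero_add, zero_pow hh.ne', mul_zero, sub_zero] at h1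
    exact hb0 ((pow_eq_zero_iff (by omega : n ≠ 0)).mp h1.symm)
  -- common roots of P and P' equal 1
  have hkey : ∀ z : ℂ, P.eval z = 0 → (derivative P).eval z = 0 → z = 1 := by
    intro z hz hz'
    rw [hevalP z] at hz
    rw [hevalD z] at hz'
    have e1 : (a * z + b) ^ n = (a + b) ^ n * z ^ h := by linear_combination hz
    have hz0 : z ≠ 0 := by
      rintro rfl
      rw [zero_pow hh.ne', mul_zero, zero_add, mul_zero] at e1
      exact hb0 ((pow_eq_zero_iff (by omega : n ≠ 0)).mp e1)
    have haz : a * z + b ≠ 0 := by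
      intro h0
      rw [h0, zero_pow (by omega : n ≠ 0)] at e1
      exact (mul_ne_zero (pow_ne_zero _ hab0) (pow_ne_zero _ hz0)) e1.symm
    have e2 : (a * z + b) ^ (n - 1) = (a + b) ^ (n - 1) * z ^ (h - 1) := by
      apply mul_left_cancel₀ (mul_ne_zero hab0 ha0)
      rw [pab] at hz'
      linear_combination hz'
    have pn : (a * z + b) ^ n = (a * z + b) ^ (n - 1) * (a * z + b) := by
      rw [← pow_succ]; congr 1; omega
    have ph : z ^ h = z ^ (h - 1) * z := by
      rw [← pow_succ]; congr 1; omega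
    have e3 : (a + b) ^ (n - 1) * z ^ (h - 1) * (a * z + b)
        = (a + b) ^ (n - 1) * z ^ (h - 1) * ((a + b) * z) := by
      rw [pn, ph, pab] at e1
      linear_combination e1 - (a * z + b) * e2
    have e4 : a * z + b = (a + b) * z :=
      mul_left_cancel₀ (mul_ne_zero (pow_ne_zero _ hab0) (pow_ne_zero _ hz0)) e3
    have e5 : b * z = b * 1 := by linear_combination -e4
    exact mul_left_cancel₀ hb0 e5
  -- roots of P and its derivatives at 1
  have hroot1 : P.IsRoot 1 := by
    rw [IsRoot, hevalP]; ring
  have hd1 : (derivative P).IsRoot 1 := by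
    rw [IsRoot, hevalD, pab]; ring
  have hdd_ne : ¬ (derivative (derivative P)).IsRoot 1 := by
    rw [IsRoot, hDD1]
    exact mul_ne_zero (mul_ne_zero (mul_ne_zero (pow_ne_zero _ hab0) ha0) hab0) hb0
  have hD0 : derivative P ≠ 0 := by
    intro e; exact hdd_ne (by simp [e])
  have m1 : 1 ≤ P.rootMultiplicity 1 := (rootMultiplicity_pos hP0).2 hroot1
  have r2 : (derivative P).rootMultiplicity 1 = P.rootMultiplicity 1 - 1 :=
    derivative_rootMultiplicity_of_root hroot1
  have m2 : 1 ≤ (derivative P).rootMultiplicity 1 := (rootMultiplicity_pos hD0).2 hd1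
  have r3 : (derivative (derivative P)).rootMultiplicity 1
      = (derivative P).rootMultiplicity 1 - 1 := derivative_rootMultiplicity_of_root hd1
  have r0 : (derivative (derivative P)).rootMultiplicity 1 = 0 := rootMultiplicity_eq_zero hdd_ne
  have hm : P.rootMultiplicity 1 = 2 := by omega
  -- simple roots
  have hsimple : ∀ z : ℂ, z ≠ 1 → P.IsRoot z → P.rootMultiplicity z = 1 := by
    intro z hz1 hz
    have hd : ¬ (derivative P).IsRoot z := fun e => hz1 (hkey z hz e)
    have hr : (derivative P).rootMultiplicity z = P.rootMultiplicity z - 1 :=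
      derivative_rootMultiplicity_of_root hz
    have h0 : (derivative P).rootMultiplicity z = 0 := rootMultiplicity_eq_zero hd
    have m1' : 1 ≤ P.rootMultiplicity z := (rootMultiplicity_pos hP0).2 hz
    omega
  refine ⟨hm, hsimple, ?_⟩
  -- degree of P
  have hdeg : P.natDegree = n := by
    rw [hP]
    have d1 : ((C a * X + C b) ^ n).natDegree = n := by
      rw [natDegree_pow, natDegree_linear ha0, mul_one]
    have d2 : (C ((a + b) ^ n) * X ^ h).natDegree = h :=
      natDegree_C_mul_X_pow h _ (pow_ne_zero _ hab0)
    rw [natDegree_sub_eq_left_of_natDegree_lt (by rw [d1, d2]; omega), d1]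
  have hcard : Multiset.card P.roots = n := by
    rw [← hdeg]
    exact splits_iff_card_roots.1 (IsAlgClosed.splits P)
  set S := P.roots.toFinset with hS
  have h1S : (1 : ℂ) ∈ S := by
    rw [hS, Multiset.mem_toFinset, mem_roots hP0]; exact hroot1
  have hsum : ∑ z ∈ S, P.rootMultiplicity z = n := by
    rw [← hcard, ← Multiset.toFinset_sum_count_eq]
    exact Finset.sum_congr rfl fun z _ => (count_roots P).symm
  have hsplit : P.rootMultiplicity 1 + ∑ z ∈ S.erase 1, P.rootMultiplicity z
      = ∑ z ∈ S, P.rootMultiplicity z :=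
    Finset.add_sum_erase S (fun z => P.rootMultiplicity z) h1S
  have herase : ∑ z ∈ S.erase 1, P.rootMultiplicity z = (S.erase 1).card := by
    rw [Finset.card_eq_sum_ones]
    refine Finset.sum_congr rfl fun z hz => ?_
    rw [Finset.mem_erase] at hz
    have hzr : P.IsRoot z := by
      have := hz.2
      rw [hS, Multiset.mem_toFinset, mem_roots hP0] at this
      exact this
    exact hsimple z hz.1 hzr
  have hce : (S.erase 1).card = S.card - 1 := Finset.card_erase_of_mem h1S
  have hS1 : 1 ≤ S.card := Finset.card_pos.2 ⟨1, h1S⟩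
  omega
end

section
/- Let h, k be coprime positive integers and let P(t) = (h·t+k)^(h+k) − (h+k)^(h+k)·t^h ∈ ℂ[t]. Then the set {(z,w) ∈ ℂ² : (h·z^k + k·w^h)^(h+k) = (h+k)^(h+k)·(z·w)^(hk)} is equal to the union, over all complex roots α of P, of the curves {(z,w) ∈ ℂ² : z^k = α·w^h}. Equivalently: the preimage in the (z,w)-coordinates of the branch curve {x^(h+k)=y^(hk)} under F_{h,k} is the union of the curves z^k = α·w^h for α a root of P, the ramification divisor being the component with α = 1. -/
lemma stmt_3_aux (h k : ℕ) (α z w : ℂ) (hw : w ≠ 0) (hz : z ^ k = α * w ^ h) :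
    (((h : ℂ) * z ^ k + (k : ℂ) * w ^ h) ^ (h + k)
        = ((h : ℂ) + (k : ℂ)) ^ (h + k) * (z * w) ^ (h * k)) ↔
    (((h : ℂ) * α + (k : ℂ)) ^ (h + k)
        = ((h : ℂ) + (k : ℂ)) ^ (h + k) * α ^ h) := by
  have h1 : (h : ℂ) * z ^ k + (k : ℂ) * w ^ h = ((h : ℂ) * α + k) * w ^ h := by
    rw [hz]; ring
  have hz' : z ^ (h * k) = α ^ h * w ^ (h * h) := by
    rw [mul_comm h k, pow_mul, hz, mul_pow, ← pow_mul]
  have h2 : (z * w) ^ (h * k) = α ^ h * w ^ (h * (h + k)) := by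
    rw [mul_pow, hz', Nat.mul_add, pow_add]; ring
  rw [h1, h2, mul_pow, ← pow_mul, ← mul_assoc]
  constructor
  · intro e; exact mul_right_cancel₀ (pow_ne_zero _ hw) e
  · intro e; rw [e]

/-- For coprime positive integers `h, k`, the preimage in the `(z,w)`-coordinates
of the branch curve `x^(h+k) = y^(hk)` under `F_{h,k}` is the union, over the
complex roots `α` of `P(t) = (h·t+k)^(h+k) − (h+k)^(h+k)·t^h`, of the curves
`z^k = α·w^h`. -/
theorem stmt_3 (h k : ℕ) (hh : 0 < h) (hk : 0 < k) (hcop : Nat.Coprime h k) :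
    {p : ℂ × ℂ | ((h : ℂ) * p.1 ^ k + (k : ℂ) * p.2 ^ h) ^ (h + k)
        = ((h : ℂ) + (k : ℂ)) ^ (h + k) * (p.1 * p.2) ^ (h * k)} =
    ⋃ α ∈ {α : ℂ | ((h : ℂ) * α + (k : ℂ)) ^ (h + k)
        = ((h : ℂ) + (k : ℂ)) ^ (h + k) * α ^ h},
      {p : ℂ × ℂ | p.1 ^ k = α * p.2 ^ h} := by
  have hhc : (h : ℂ) ≠ 0 := Nat.cast_ne_zero.2 hh.ne'
  ext ⟨z, w⟩
  simp only [Set.mem_setOf_eq, Set.mem_iUnion, exists_prop]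
  constructor
  · intro hp
    by_cases hw : w = 0
    · subst hw
      have hz : z = 0 := by
        have h0 : ((h : ℂ) * z ^ k + (k : ℂ) * 0 ^ h) ^ (h + k) = 0 := by
          rw [hp]
          simp [zero_pow, (Nat.mul_pos hh hk).ne']
        have := pow_eq_zero_iff (by omega : h + k ≠ 0) |>.1 h0
        rw [zero_pow hh.ne', mul_zero, add_zero] at this
        have := (mul_eq_zero.1 this).resolve_left hhc
        exact pow_eq_zero_iff hk.ne' |>.1 this
      exact ⟨1, by ring, by simp [hz, zero_pow hh.ne', zero_pow hk.ne']⟩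
    · refine ⟨z ^ k / w ^ h, ?_, by field_simp⟩
      exact (stmt_3_aux h k _ z w hw (by field_simp)).1 hp
  · rintro ⟨α, hα, hzw⟩
    by_cases hw : w = 0
    · subst hw
      have hz : z = 0 := by
        rw [zero_pow hh.ne', mul_zero] at hzw
        exact pow_eq_zero_iff hk.ne' |>.1 hzw
      simp [hz, zero_pow hh.ne', zero_pow hk.ne', zero_pow (by omega : h + k ≠ 0),
        zero_pow (Nat.mul_pos hh hk).ne']
    · exact (stmt_3_aux h k α z w hw hzw).2 hα
end

section
/- Let h, k be coprime integers with 1 ≤ h < k and let a, b be positive integers. Consider the two polynomials f₁ = h·z^k + k·w^h − (h+k)·x^a and f₂ = z·w − y^b on ℂ⁴. Then the 2×4 Jacobian matrix of (f₁,f₂) with respect to (x,y,z,w) has rank 2 at every point of the surface S_{h,k,a,b} = {f₁ = f₂ = 0} if and only if (a = 1 and b = 1) or (h = 1 and b = 1). (In other words, the surface S_{h,k,a,b} is smooth exactly in these cases.) -/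
/-- If a `2 × 4` complex matrix has two columns forming an invertible `2 × 2` minor,
its rank is `2`. -/
lemma aux_rank_two (M : Matrix (Fin 2) (Fin 4) ℂ) (c₀ c₁ : Fin 4)
    (hdet : M 0 c₀ * M 1 c₁ - M 0 c₁ * M 1 c₀ ≠ 0) : M.rank = 2 := by
  set P : Matrix (Fin 4) (Fin 2) ℂ :=
    Matrix.of (fun j i => if j = (![c₀, c₁] : Fin 2 → Fin 4) i then (1 : ℂ) else 0) with hP
  have hMP : ∀ r i, (M * P) r i = M r ((![c₀, c₁] : Fin 2 → Fin 4) i) := by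
    intro r i
    simp only [Matrix.mul_apply, hP, Matrix.of_apply, mul_ite, mul_one, mul_zero]
    rw [Finset.sum_ite_eq' Finset.univ]
    simp
  have hdet' : (M * P).det ≠ 0 := by
    rw [Matrix.det_fin_two, hMP, hMP, hMP, hMP]
    simpa using hdet
  have hunit : IsUnit (M * P) :=
    (Matrix.isUnit_iff_isUnit_det _).mpr (isUnit_iff_ne_zero.mpr hdet')
  have h2 : (M * P).rank = 2 := by
    rw [Matrix.rank_of_isUnit _ hunit]; simp
  refine le_antisymm (M.rank_le_card_height.trans (by simp)) ?_
  calc (2 : ℕ) = (M * P).rank := h2.symm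
    _ ≤ M.rank := Matrix.rank_mul_le_left M P

/-- A `2 × 4` complex matrix of rank `2` has no zero row. -/
lemma aux_row_ne_zero (M : Matrix (Fin 2) (Fin 4) ℂ) (hr : M.rank = 2) (i : Fin 2) :
    M i ≠ 0 := by
  intro h0
  have htop : LinearMap.range M.mulVecLin = ⊤ := by
    apply Submodule.eq_top_of_finrank_eq
    rw [show Module.finrank ℂ (LinearMap.range M.mulVecLin) = M.rank from rfl, hr,
      Module.finrank_fintype_fun_eq_card]
    simp
  obtain ⟨v, hv⟩ := LinearMap.range_eq_top.mp htop (Pi.single i 1)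
  have := congrFun hv i
  simp only [Matrix.mulVecLin_apply, Matrix.mulVec, Pi.single_eq_same] at this
  rw [show M i = 0 from h0] at this
  simp [dotProduct] at this

/-- For coprime integers `1 ≤ h < k` and positive integers `a, b`, the Jacobian
matrix of `(f₁, f₂) = (h·z^k + k·w^h − (h+k)·x^a, z·w − y^b)` with respect to
`(x, y, z, w)` has rank `2` at every point of the surface
`S_{h,k,a,b} = {f₁ = f₂ = 0}` if and only if `(a = 1 ∧ b = 1) ∨ (h = 1 ∧ b = 1)`,
i.e. the surface is smooth exactly in these cases. -/
theorem stmt_5 (h k a b : ℕ) (hh : 1 ≤ h) (hlt : h < k) (hcop : Nat.Coprime h k)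
    (ha : 0 < a) (hb : 0 < b) :
    (∀ x y z w : ℂ,
      (h : ℂ) * z ^ k + (k : ℂ) * w ^ h = ((h : ℂ) + (k : ℂ)) * x ^ a →
      z * w = y ^ b →
      (Matrix.of
        ![![-(((h : ℂ) + (k : ℂ)) * (a : ℂ) * x ^ (a - 1)), 0,
            (h : ℂ) * (k : ℂ) * z ^ (k - 1), (k : ℂ) * (h : ℂ) * w ^ (h - 1)],
          ![0, -((b : ℂ) * y ^ (b - 1)), w, z]] :
        Matrix (Fin 2) (Fin 4) ℂ).rank = 2)
    ↔ ((a = 1 ∧ b = 1) ∨ (h = 1 ∧ b = 1)) := by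
  have hk1 : 1 < k := lt_of_le_of_lt hh hlt
  have hhk : ((h : ℂ) + (k : ℂ)) ≠ 0 := by
    have : ((h + k : ℕ) : ℂ) ≠ 0 := Nat.cast_ne_zero.mpr (by omega)
    push_cast at this; exact this
  have hkC : (k : ℂ) ≠ 0 := Nat.cast_ne_zero.mpr (by omega)
  constructor
  · intro H
    have H0 := H 0 0 0 0 (by
        rw [zero_pow (by omega : k ≠ 0), zero_pow (by omega : h ≠ 0),
          zero_pow (by omega : a ≠ 0)]; ring)
      (by rw [zero_pow (by omega : b ≠ 0)]; ring)
    by_cases hb1 : b = 1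
    · subst hb1
      by_cases ha1 : a = 1
      · exact Or.inl ⟨ha1, rfl⟩
      · by_cases hh1 : h = 1
        · exact Or.inr ⟨hh1, rfl⟩
        · exfalso
          apply aux_row_ne_zero _ H0 0
          funext j
          fin_cases j <;>
            simp [zero_pow (by omega : a - 1 ≠ 0), zero_pow (by omega : k - 1 ≠ 0),
              zero_pow (by omega : h - 1 ≠ 0)]
    · exfalso
      apply aux_row_ne_zero _ H0 1
      funext j
      fin_cases j <;> simp [zero_pow (by omega : b - 1 ≠ 0)]
  · rintro (⟨ha1, hb1⟩ | ⟨hh1, hb1⟩) <;> subst hb1 <;> intro x y z w he1 he2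
    · subst ha1
      apply aux_rank_two _ 0 1
      simp [hhk]
    · subst hh1
      apply aux_rank_two _ 3 1
      simp [hkC]
end

section
/- Let h, k be coprime integers with 1 ≤ h < k and let a, b be positive integers. Consider on ℂ⁴ the polynomials f₁ = h·z^k + k·w^h − (h+k)·x^a, f₂ = z·w − y^b, and f₃ = z^k − w^h, and let V = {f₁ = f₂ = 0} (the surface S_{h,k,a,b}) and W = V ∩ {f₃ = 0} (the ramification curve of F_{h,k,a,b}). Then [the Jacobian of (f₁,f₂) has rank 2 at every point of V, and the Jacobian of (f₁,f₂,f₃) has rank 3 at every point of W] if and only if h = a = b = 1. (That is, the cover and its ramification divisor are both smooth exactly when h = a = b = 1.) -/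
/-!
For `h = a = b = 1` both Jacobians have a maximal minor equal to `±(1 + k)` at every point
of `ℂ⁴` (columns `x, y` for the surface, `x, y, w` for the ramification curve). Conversely,
the origin lies on the ramification curve, and there the Jacobian of `(f₁, f₂, f₃)` has
dependent rows unless `h = a = b = 1`: the `f₃`-row vanishes if `h ≥ 2`, the `f₂`-row
vanishes if `b ≥ 2`, and if `h = 1`, `a ≥ 2` the `f₁`- and `f₃`-rows are `(0, 0, 0, k)`
and `(0, 0, 0, -1)`.
-/

namespace Matrix

variable {m n R : Type*} [Fintype m] [Fintype n] [CommRing R] [IsDomain R]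

theorem rank_eq_card_height_of_det_submatrix_ne_zero [DecidableEq m]
    {M : Matrix m n R} (c : m → n) (hc : (M.submatrix id c).det ≠ 0) :
    M.rank = Fintype.card m :=
  le_antisymm M.rank_le_card_height
    ((rank_of_det_ne_zero hc).symm.trans_le (M.rank_submatrix_le id c))

theorem rank_lt_card_height_of_vecMul_eq_zero {K : Type*} [Field K] {M : Matrix m n K}
    {v : m → K} (hv : v ≠ 0) (hM : v ᵥ* M = 0) : M.rank < Fintype.card m := by
  refine M.rank_le_card_height.lt_of_ne fun hrank => hv ?_
  have hrows : LinearIndependent K M.row := by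
    rw [linearIndependent_iff_card_eq_finrank_span, ← hrank, rank_eq_finrank_span_row,
      Set.finrank]
  exact vecMul_injective_iff.2 hrows (hM.trans (zero_vecMul M).symm)

end Matrix

def jacobianSurface (h k a b : ℕ) (x y z w : ℂ) : Matrix (Fin 2) (Fin 4) ℂ :=
  Matrix.of
    ![![-(((h : ℂ) + (k : ℂ)) * (a : ℂ) * x ^ (a - 1)), 0,
        (h : ℂ) * (k : ℂ) * z ^ (k - 1), (k : ℂ) * (h : ℂ) * w ^ (h - 1)],
      ![0, -((b : ℂ) * y ^ (b - 1)), w, z]]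

def jacobianRamification (h k a b : ℕ) (x y z w : ℂ) : Matrix (Fin 3) (Fin 4) ℂ :=
  Matrix.of
    ![![-(((h : ℂ) + (k : ℂ)) * (a : ℂ) * x ^ (a - 1)), 0,
        (h : ℂ) * (k : ℂ) * z ^ (k - 1), (k : ℂ) * (h : ℂ) * w ^ (h - 1)],
      ![0, -((b : ℂ) * y ^ (b - 1)), w, z],
      ![0, 0, (k : ℂ) * z ^ (k - 1), -((h : ℂ) * w ^ (h - 1))]]

theorem rank_jacobianSurface_one (k : ℕ) (x y z w : ℂ) :
    (jacobianSurface 1 k 1 1 x y z w).rank = 2 := by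
  refine Matrix.rank_eq_card_height_of_det_submatrix_ne_zero ![0, 1] ?_
  simp [Matrix.det_fin_two, jacobianSurface]
  norm_cast
  omega

theorem rank_jacobianRamification_one (k : ℕ) (x y z w : ℂ) :
    (jacobianRamification 1 k 1 1 x y z w).rank = 3 := by
  refine Matrix.rank_eq_card_height_of_det_submatrix_ne_zero ![0, 1, 3] ?_
  simp [Matrix.det_fin_three, jacobianRamification]
  intro hk
  exact Nat.cast_add_one_ne_zero k (by linear_combination -hk)

section Origin

variable {h k a b : ℕ}

theorem rank_jacobianRamification_zero_lt_of_two_le_h (hh : 2 ≤ h) (hk : 2 ≤ k) :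
    (jacobianRamification h k a b 0 0 0 0).rank < 3 := by
  refine Matrix.rank_lt_card_height_of_vecMul_eq_zero (v := Pi.single 2 1) (by simp) ?_
  ext j
  fin_cases j <;> simp [jacobianRamification, Matrix.vecMul, dotProduct, Fin.sum_univ_three,
    show k - 1 ≠ 0 by omega, show h - 1 ≠ 0 by omega]

theorem rank_jacobianRamification_zero_lt_of_two_le_b (hb : 2 ≤ b) :
    (jacobianRamification h k a b 0 0 0 0).rank < 3 := by
  refine Matrix.rank_lt_card_height_of_vecMul_eq_zero (v := Pi.single 1 1) (by simp) ?_
  ext j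
  fin_cases j <;> simp [jacobianRamification, Matrix.vecMul, dotProduct, Fin.sum_univ_three,
    show b - 1 ≠ 0 by omega]

theorem rank_jacobianRamification_zero_lt_of_two_le_a (ha : 2 ≤ a) (hk : 2 ≤ k) :
    (jacobianRamification 1 k a b 0 0 0 0).rank < 3 := by
  refine Matrix.rank_lt_card_height_of_vecMul_eq_zero (v := ![1, 0, k]) (by simp) ?_
  ext j
  fin_cases j <;> simp [jacobianRamification, Matrix.vecMul, dotProduct, Fin.sum_univ_three,
    show a - 1 ≠ 0 by omega, show k - 1 ≠ 0 by omega]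

theorem eq_one_of_rank_jacobianRamification_zero (hh : 1 ≤ h) (hk : 2 ≤ k) (ha : 0 < a)
    (hb : 0 < b) (hrank : (jacobianRamification h k a b 0 0 0 0).rank = 3) :
    h = 1 ∧ a = 1 ∧ b = 1 := by
  have h_eq : h = 1 := by
    by_contra hne
    exact (rank_jacobianRamification_zero_lt_of_two_le_h (by omega) hk).ne hrank
  subst h_eq
  refine ⟨rfl, ?_, ?_⟩
  · by_contra hne
    exact (rank_jacobianRamification_zero_lt_of_two_le_a (by omega) hk).ne hrank
  · by_contra hne
    exact (rank_jacobianRamification_zero_lt_of_two_le_b (by omega)).ne hrank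

end Origin

theorem stmt_6_general (h k a b : ℕ) (hh : 1 ≤ h) (hlt : h < k)
    (ha : 0 < a) (hb : 0 < b) :
    ((∀ x y z w : ℂ,
        (h : ℂ) * z ^ k + (k : ℂ) * w ^ h = ((h : ℂ) + (k : ℂ)) * x ^ a →
        z * w = y ^ b →
        (Matrix.of
          ![![-(((h : ℂ) + (k : ℂ)) * (a : ℂ) * x ^ (a - 1)), 0,
              (h : ℂ) * (k : ℂ) * z ^ (k - 1), (k : ℂ) * (h : ℂ) * w ^ (h - 1)],
            ![0, -((b : ℂ) * y ^ (b - 1)), w, z]] :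
          Matrix (Fin 2) (Fin 4) ℂ).rank = 2) ∧
      (∀ x y z w : ℂ,
        (h : ℂ) * z ^ k + (k : ℂ) * w ^ h = ((h : ℂ) + (k : ℂ)) * x ^ a →
        z * w = y ^ b →
        z ^ k = w ^ h →
        (Matrix.of
          ![![-(((h : ℂ) + (k : ℂ)) * (a : ℂ) * x ^ (a - 1)), 0,
              (h : ℂ) * (k : ℂ) * z ^ (k - 1), (k : ℂ) * (h : ℂ) * w ^ (h - 1)],
            ![0, -((b : ℂ) * y ^ (b - 1)), w, z],
            ![0, 0, (k : ℂ) * z ^ (k - 1), -((h : ℂ) * w ^ (h - 1))]] :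
          Matrix (Fin 3) (Fin 4) ℂ).rank = 3))
    ↔ (h = 1 ∧ a = 1 ∧ b = 1) := by
  constructor
  · rintro ⟨-, hW⟩
    refine eq_one_of_rank_jacobianRamification_zero hh (by omega) ha hb (hW 0 0 0 0 ?_ ?_ ?_)
    all_goals simp [zero_pow, ha.ne', hb.ne', show h ≠ 0 by omega, show k ≠ 0 by omega]
  · rintro ⟨rfl, rfl, rfl⟩
    exact ⟨fun x y z w _ _ => rank_jacobianSurface_one k x y z w,
      fun x y z w _ _ _ => rank_jacobianRamification_one k x y z w⟩

/-- For coprime integers `1 ≤ h < k` and positive integers `a, b`, the surface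
`V = S_{h,k,a,b} = {f₁ = f₂ = 0}` and the ramification curve
`W = V ∩ {z^k = w^h}` of `F_{h,k,a,b}` are both smooth (the Jacobian of
`(f₁, f₂)` has rank 2 on `V` and the Jacobian of `(f₁, f₂, f₃)` has rank 3 on
`W`) if and only if `h = a = b = 1`. -/
theorem stmt_6 (h k a b : ℕ) (hh : 1 ≤ h) (hlt : h < k) (hcop : Nat.Coprime h k)
    (ha : 0 < a) (hb : 0 < b) :
    ((∀ x y z w : ℂ,
        (h : ℂ) * z ^ k + (k : ℂ) * w ^ h = ((h : ℂ) + (k : ℂ)) * x ^ a →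
        z * w = y ^ b →
        (Matrix.of
          ![![-(((h : ℂ) + (k : ℂ)) * (a : ℂ) * x ^ (a - 1)), 0,
              (h : ℂ) * (k : ℂ) * z ^ (k - 1), (k : ℂ) * (h : ℂ) * w ^ (h - 1)],
            ![0, -((b : ℂ) * y ^ (b - 1)), w, z]] :
          Matrix (Fin 2) (Fin 4) ℂ).rank = 2) ∧
      (∀ x y z w : ℂ,
        (h : ℂ) * z ^ k + (k : ℂ) * w ^ h = ((h : ℂ) + (k : ℂ)) * x ^ a →
        z * w = y ^ b →
        z ^ k = w ^ h →
        (Matrix.of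
          ![![-(((h : ℂ) + (k : ℂ)) * (a : ℂ) * x ^ (a - 1)), 0,
              (h : ℂ) * (k : ℂ) * z ^ (k - 1), (k : ℂ) * (h : ℂ) * w ^ (h - 1)],
            ![0, -((b : ℂ) * y ^ (b - 1)), w, z],
            ![0, 0, (k : ℂ) * z ^ (k - 1), -((h : ℂ) * w ^ (h - 1))]] :
          Matrix (Fin 3) (Fin 4) ℂ).rank = 3))
    ↔ (h = 1 ∧ a = 1 ∧ b = 1) :=
  stmt_6_general h k a b hh hlt ha hb
end

section
/- Let h, k be positive integers and let λ be a real number with 0 < λ < 1. Define the real polynomial f(s) = h·s^(h+k) − (h+k)·λ·s^h + k. Then: (i) for every real s with f′(s) = 0 one has f(s) > 0 (all real critical values of f are strictly positive); (ii) f has at most one real zero; and (iii) if f has a real zero s₀, then h+k is odd and s₀ < 0. -/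
lemma amgm7 (h k : ℕ) (hh : 0 < h) (hk : 0 < k) (x : ℝ) (hx : 0 ≤ x) :
    ((h:ℝ) + k) * x ^ h ≤ (h:ℝ) * x ^ (h + k) + k := by
  have hN : (0:ℝ) < (h:ℝ) + k := by positivity
  have key := Real.geom_mean_le_arith_mean2_weighted
    (w₁ := (h:ℝ)/((h:ℝ)+k)) (w₂ := (k:ℝ)/((h:ℝ)+k))
    (p₁ := x ^ (h+k)) (p₂ := 1)
    (by positivity) (by positivity) (by positivity) zero_le_one
    (by field_simp)
  rw [Real.one_rpow, mul_one] at key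
  have h1 : (x ^ (h+k) : ℝ) ^ ((h:ℝ)/((h:ℝ)+k)) = x ^ h := by
    rw [← Real.rpow_natCast x (h+k), ← Real.rpow_mul hx,
      show (((h+k : ℕ)):ℝ) * ((h:ℝ)/((h:ℝ)+k)) = (h:ℕ) by push_cast; field_simp,
      Real.rpow_natCast]
  rw [h1] at key
  have h2 := mul_le_mul_of_nonneg_left key hN.le
  calc ((h:ℝ)+k) * x ^ h ≤ ((h:ℝ)+k) * ((h:ℝ)/((h:ℝ)+k) * x^(h+k) + (k:ℝ)/((h:ℝ)+k) * 1) := h2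
    _ = (h:ℝ) * x ^ (h + k) + k := by field_simp

set_option maxHeartbeats 1600000 in
/-- For positive integers `h, k` and real `0 < λ < 1`, the real polynomial
function `f(s) = h·s^(h+k) − (h+k)·λ·s^h + k` has strictly positive values at
all of its real critical points, has at most one real zero, and if it has a
real zero `s₀` then `h + k` is odd and `s₀ < 0`. -/
theorem stmt_7 (h k : ℕ) (hh : 0 < h) (hk : 0 < k)
    (lam : ℝ) (hlam0 : 0 < lam) (hlam1 : lam < 1)
    (f : ℝ → ℝ)
    (hf : ∀ s, f s = (h : ℝ) * s ^ (h + k) - ((h : ℝ) + (k : ℝ)) * lam * s ^ h + (k : ℝ)) :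
    (∀ s : ℝ, deriv f s = 0 → 0 < f s) ∧
    {s : ℝ | f s = 0}.Subsingleton ∧
    (∀ s₀ : ℝ, f s₀ = 0 → Odd (h + k) ∧ s₀ < 0) := by
  have hfun : f = fun s => (h:ℝ) * s ^ (h+k) - ((h:ℝ)+(k:ℝ)) * lam * s ^ h + (k:ℝ) :=
    funext hf
  have hkR : (1:ℝ) ≤ (k:ℝ) := by exact_mod_cast hk
  have hhR : (1:ℝ) ≤ (h:ℝ) := by exact_mod_cast hh
  -- derivative
  have hderiv : ∀ s : ℝ, HasDerivAt f
      ((h:ℝ) * (((h+k:ℕ):ℝ) * s ^ (h+k-1)) - ((h:ℝ)+(k:ℝ)) * lam * ((h:ℕ) * s ^ (h-1))) s := by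
    intro s
    rw [hfun]
    exact (((hasDerivAt_pow (h+k) s).const_mul ((h:ℝ))).sub
      ((hasDerivAt_pow h s).const_mul (((h:ℝ)+(k:ℝ)) * lam))).add_const _
  have hderiv' : ∀ s : ℝ, deriv f s = (h:ℝ) * ((h:ℝ)+(k:ℝ)) * s ^ (h-1) * (s ^ k - lam) := by
    intro s
    rw [(hderiv s).deriv]
    have e : s ^ (h+k-1) = s ^ (h-1) * s ^ k := by
      rw [← pow_add]; congr 1; omega
    rw [e]; push_cast; ring
  -- continuity
  have hcont : Continuous f := by rw [hfun]; continuity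
  -- positivity on nonnegatives
  have hpos : ∀ s : ℝ, 0 ≤ s → 0 < f s := by
    intro s hs
    rw [hf]
    rcases eq_or_lt_of_le hs with rfl | hs'
    · simp [zero_pow hh.ne', zero_pow (by omega : h + k ≠ 0)]
      linarith
    · have key := amgm7 h k hh hk s hs
      have hsp : (0:ℝ) < s ^ h := pow_pos hs' h
      nlinarith [mul_pos (show (0:ℝ) < (h:ℝ)+(k:ℝ) by positivity)
        (mul_pos hsp (sub_pos.mpr hlam1))]
  have hneg : ∀ s₀ : ℝ, f s₀ = 0 → s₀ < 0 := by
    intro s₀ h0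
    by_contra hc
    push_neg at hc
    exact absurd h0 (ne_of_gt (hpos s₀ hc))
  -- critical values positive
  have hcrit : ∀ s : ℝ, deriv f s = 0 → 0 < f s := by
    intro s hs0
    rw [hderiv'] at hs0
    rcases mul_eq_zero.mp hs0 with h1 | h2
    · rcases mul_eq_zero.mp h1 with h3 | h4
      · have : ((h:ℝ) * ((h:ℝ)+(k:ℝ))) ≠ 0 := by positivity
        exact absurd h3 this
      · -- s ^ (h-1) = 0, so s = 0
        rcases Nat.eq_or_lt_of_le hh with h1' | h1'
        · rw [← h1'] at h4; norm_num at h4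
        · have hs : s = 0 := by
            have := pow_eq_zero_iff (n := h-1) (by omega) |>.mp h4
            exact this
          rw [hs]; exact hpos 0 le_rfl
    · have hsk : s ^ k = lam := by linarith
      rw [hf]
      have hsN : s ^ (h+k) = s ^ h * lam := by rw [pow_add, hsk]
      have habs : |s| < 1 := by
        have h5 : |s| ^ k < 1 := by
          rw [← abs_pow, hsk, abs_of_pos hlam0]; exact hlam1
        by_contra hc
        push_neg at hc
        have := one_le_pow₀ hc (n := k)
        linarith
      have h6 : lam * s ^ h < 1 := by
        have h7 : lam * s ^ h ≤ |lam * s ^ h| := le_abs_self _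
        have h8 : |lam * s ^ h| = lam * |s| ^ h := by
          rw [abs_mul, abs_of_pos hlam0, abs_pow]
        have h9 : |s| ^ h ≤ 1 := pow_le_one₀ (abs_nonneg s) habs.le
        nlinarith
      rw [hsN]
      nlinarith
  -- Odd (h+k) whenever a zero exists
  have hOdd : ∀ s₀ : ℝ, f s₀ = 0 → Odd (h + k) := by
    intro s₀ h0
    have hs0 : s₀ < 0 := hneg s₀ h0
    by_contra hcN
    rw [Nat.not_odd_iff_even] at hcN
    rcases Nat.even_or_odd h with he | ho
    · have hkE : Even k := (Nat.even_add.mp hcN).mp he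
      have h1 := hpos (-s₀) (by linarith)
      rw [hf] at h1 h0
      rw [hcN.neg_pow, he.neg_pow] at h1
      linarith
    · have h2 : s₀ ^ h < 0 := ho.pow_neg hs0
      have h3 : (0:ℝ) ≤ s₀ ^ (h+k) := hcN.pow_nonneg s₀
      rw [hf] at h0
      have h4 : (0:ℝ) < ((h:ℝ)+(k:ℝ))*lam := by positivity
      have h5 := mul_pos h4 (neg_pos.mpr h2)
      have h6 : (0:ℝ) ≤ (h:ℝ) * s₀ ^ (h+k) := mul_nonneg (by positivity) h3
      nlinarith [h5, h6]
  refine ⟨hcrit, ?_, fun s₀ h0 => ⟨hOdd s₀ h0, hneg s₀ h0⟩⟩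
  intro a ha b hb
  simp only [Set.mem_setOf_eq] at ha hb
  have haneg := hneg a ha
  have hbneg := hneg b hb
  have hodd : Odd (h + k) := hOdd a ha
  rcases Nat.even_or_odd k with hkE | hkO
  · -- k even, hence h odd
    have hhO : Odd h := by
      rcases Nat.even_or_odd h with hhE | hhO
      · exact absurd hodd (Nat.not_odd_iff_even.mpr (Nat.even_add.mpr ⟨fun _ => hkE, fun _ => hhE⟩))
      · exact hhO
    set r := lam ^ (1/(k:ℝ)) with hr
    have hr0 : 0 < r := Real.rpow_pos_of_pos hlam0 _
    have hrk : r ^ k = lam := by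
      rw [hr, ← Real.rpow_natCast (lam ^ (1/(k:ℝ))) k, ← Real.rpow_mul hlam0.le,
        show (1/(k:ℝ)) * (k:ℕ) = 1 by field_simp, Real.rpow_one]
    have hzone : ∀ s : ℝ, s < 0 → f s = 0 → s ≤ -r := by
      intro s hs hfs
      by_contra hc
      push_neg at hc
      have h1 : s ^ k ≤ lam := by
        have habsr : |s| ≤ r := by rw [abs_of_neg hs]; linarith
        calc s ^ k = |s| ^ k := by rw [← abs_pow, abs_of_nonneg (hkE.pow_nonneg s)]
          _ ≤ r ^ k := pow_le_pow_left₀ (abs_nonneg s) habsr k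
          _ = lam := hrk
      have h2 : s ^ h < 0 := hhO.pow_neg hs
      have hsplit : s ^ (h+k) = s ^ h * s ^ k := pow_add s h k
      rw [hf, hsplit] at hfs
      nlinarith [mul_le_mul_of_nonpos_left h1 h2.le,
        mul_pos (mul_pos (show (0:ℝ)<(k:ℝ) by positivity) hlam0) (neg_pos.mpr h2)]
    have hmono : StrictMonoOn f (Set.Iic (-r)) := by
      apply strictMonoOn_of_deriv_pos (convex_Iic _) hcont.continuousOn
      intro x hx
      rw [interior_Iic, Set.mem_Iio] at hx
      have hx0 : x < 0 := lt_trans hx (by linarith)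
      rw [hderiv']
      have hEh1 : Even (h-1) := by obtain ⟨m, hm⟩ := hhO; exact ⟨m, by omega⟩
      have e1 : 0 < x ^ (h-1) := hEh1.pow_pos hx0.ne
      have e2 : lam < x ^ k := by
        have hrx : r < |x| := by rw [abs_of_neg hx0]; linarith
        calc lam = r ^ k := hrk.symm
          _ < |x| ^ k := pow_lt_pow_left₀ hrx hr0.le hk.ne'
          _ = x ^ k := by rw [← abs_pow, abs_of_nonneg (hkE.pow_nonneg x)]
      calc (0:ℝ) < ((h:ℝ)*((h:ℝ)+(k:ℝ))) * (x^(h-1) * (x^k - lam)) :=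
            mul_pos (by positivity) (mul_pos e1 (sub_pos.mpr e2))
        _ = (h:ℝ) * ((h:ℝ)+(k:ℝ)) * x^(h-1) * (x^k - lam) := by ring
    exact hmono.injOn (Set.mem_Iic.mpr (hzone a haneg ha)) (Set.mem_Iic.mpr (hzone b hbneg hb))
      (ha.trans hb.symm)
  · -- k odd, hence h even
    have hhE : Even h := by
      rcases Nat.even_or_odd h with hhE | hhO
      · exact hhE
      · exact absurd (hhO.add_odd hkO) (Nat.not_even_iff_odd.mpr hodd)
    have hmono : StrictMonoOn f (Set.Iic 0) := by
      apply strictMonoOn_of_deriv_pos (convex_Iic _) hcont.continuousOn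
      intro x hx
      rw [interior_Iic, Set.mem_Iio] at hx
      rw [hderiv']
      have hOh1 : Odd (h-1) := by obtain ⟨m, hm⟩ := hhE; exact ⟨m-1, by omega⟩
      have e1 : x ^ (h-1) < 0 := hOh1.pow_neg hx
      have e2 : x ^ k - lam < 0 := by have := hkO.pow_neg hx; linarith
      calc (0:ℝ) < ((h:ℝ)*((h:ℝ)+(k:ℝ))) * (x^(h-1) * (x^k - lam)) :=
            mul_pos (by positivity) (mul_pos_of_neg_of_neg e1 e2)
        _ = (h:ℝ) * ((h:ℝ)+(k:ℝ)) * x^(h-1) * (x^k - lam) := by ring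
    exact hmono.injOn (Set.mem_Iic.mpr haneg.le) (Set.mem_Iic.mpr hbneg.le) (ha.trans hb.symm)
end

section
/- Let d, g, Σ be real numbers with d ≥ 1, g ≥ 0, 0 ≤ Σ, and Σ ≤ 3d + (5/3)(g−1). Then 2(3d+g−1) − Σ > 0 and 4(3d+g−1) / (2(3d+g−1) − Σ) ≤ 4 + 8(g−1)/(9d+g−1) < 12. -/
/-- The numerical estimate underlying the degree-12 uniqueness theorem: if
`d ≥ 1`, `g ≥ 0`, `0 ≤ Σ ≤ 3d + (5/3)(g−1)`, then `2(3d+g−1) − Σ > 0` and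
`4(3d+g−1)/(2(3d+g−1) − Σ) ≤ 4 + 8(g−1)/(9d+g−1) < 12`. -/
theorem stmt_11 (d g S : ℝ) (hd : 1 ≤ d) (hg : 0 ≤ g) (hS0 : 0 ≤ S)
    (hS : S ≤ 3 * d + (5 / 3) * (g - 1)) :
    0 < 2 * (3 * d + g - 1) - S ∧
    4 * (3 * d + g - 1) / (2 * (3 * d + g - 1) - S) ≤ 4 + 8 * (g - 1) / (9 * d + g - 1) ∧
    4 + 8 * (g - 1) / (9 * d + g - 1) < 12 := by
  have hT : 0 < 9 * d + g - 1 := by linarith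
  have hD : 0 < 2 * (3 * d + g - 1) - S := by linarith
  refine ⟨hD, ?_, ?_⟩
  · have hre : 4 + 8 * (g - 1) / (9 * d + g - 1) = 12 * (3 * d + g - 1) / (9 * d + g - 1) := by
      field_simp
      ring
    rw [hre, div_le_div_iff₀ hD hT]
    nlinarith [mul_nonneg (show (0:ℝ) ≤ 3 * d + g - 1 by linarith)
      (show (0:ℝ) ≤ 3 * d + (5 / 3) * (g - 1) - S by linarith)]
  · have h8 : 8 * (g - 1) / (9 * d + g - 1) < 8 := by
      rw [div_lt_iff₀ hT]
      nlinarith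
    linarith
end

section
/- Let n be a positive integer. Then the set Ṽ = {(z₁,w₁,z₂,w₂) ∈ ℂ⁴ : n·w₁ + z₁ⁿ = n·w₂ + z₂ⁿ and z₁·w₁ = z₂·w₂} is the union of the two sets Ṽ₊ = {(z₁,w₁,z₂,w₂) ∈ ℂ⁴ : z₁ = z₂ and w₁ = w₂} and Ṽ₋ = Ṽ ∩ {(z₁,w₁,z₂,w₂) ∈ ℂ⁴ : n·w₁ = z₂·∑_{i=0}^{n−1} z₂^i·z₁^(n−1−i)}. -/
/-- For a positive integer `n`, the fiber-product locus
`Ṽ = {n·w₁ + z₁ⁿ = n·w₂ + z₂ⁿ, z₁·w₁ = z₂·w₂}` in `ℂ⁴` (coordinates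
`(z₁, w₁, z₂, w₂)`) is the union of the diagonal component
`Ṽ₊ = {z₁ = z₂, w₁ = w₂}` and the component
`Ṽ₋ = Ṽ ∩ {n·w₁ = z₂·∑_{i<n} z₂^i·z₁^(n−1−i)}`. -/
theorem stmt_13 (n : ℕ) (hn : 0 < n) :
    {p : ℂ × ℂ × ℂ × ℂ |
        (n : ℂ) * p.2.1 + p.1 ^ n = (n : ℂ) * p.2.2.2 + p.2.2.1 ^ n ∧
        p.1 * p.2.1 = p.2.2.1 * p.2.2.2} =
    {p : ℂ × ℂ × ℂ × ℂ | p.1 = p.2.2.1 ∧ p.2.1 = p.2.2.2} ∪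
    ({p : ℂ × ℂ × ℂ × ℂ |
        (n : ℂ) * p.2.1 + p.1 ^ n = (n : ℂ) * p.2.2.2 + p.2.2.1 ^ n ∧
        p.1 * p.2.1 = p.2.2.1 * p.2.2.2} ∩
      {p : ℂ × ℂ × ℂ × ℂ |
        (n : ℂ) * p.2.1 = p.2.2.1 * ∑ i ∈ Finset.range n, p.2.2.1 ^ i * p.1 ^ (n - 1 - i)}) := by
  ext ⟨z₁, w₁, z₂, w₂⟩
  simp only [Set.mem_setOf_eq, Set.mem_union, Set.mem_inter_iff]
  constructor
  · rintro ⟨h1, h2⟩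
    by_cases hz : z₁ = z₂
    · left
      subst hz
      refine ⟨rfl, ?_⟩
      have hn' : (n : ℂ) ≠ 0 := Nat.cast_ne_zero.mpr hn.ne'
      have h3 : (n : ℂ) * w₁ = (n : ℂ) * w₂ := by linear_combination h1
      exact mul_left_cancel₀ hn' h3
    · right
      refine ⟨⟨h1, h2⟩, ?_⟩
      have hgeo : (∑ i ∈ Finset.range n, z₂ ^ i * z₁ ^ (n - 1 - i)) * (z₂ - z₁)
          = z₂ ^ n - z₁ ^ n := geom_sum₂_mul z₂ z₁ n
      have hsub : z₂ - z₁ ≠ 0 := sub_ne_zero.mpr (Ne.symm hz)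
      have key : ((n : ℂ) * w₁ - z₂ * ∑ i ∈ Finset.range n, z₂ ^ i * z₁ ^ (n - 1 - i))
          * (z₂ - z₁) = 0 := by
        linear_combination z₂ * h1 - (n : ℂ) * h2 - z₂ * hgeo
      rcases mul_eq_zero.mp key with h | h
      · exact sub_eq_zero.mp h
      · exact absurd h hsub
  · rintro (⟨h1, h2⟩ | ⟨h, _⟩)
    · subst h1; subst h2; exact ⟨rfl, rfl⟩
    · exact h
end

section
/- Let n be a positive integer and let z₁, z₂ ∈ ℂ satisfy z₂·∑_{i=0}^{n−1} z₁^(n−1−i)·z₂^i = n·z₁ⁿ and z₁ⁿ − z₂ⁿ + z₂·∑_{i=0}^{n−1} z₁^(n−1−i)·z₂^i = n·z₂ⁿ. Then z₁ = z₂. -/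
/-- For a positive integer `n`, the equations cutting out the common
ramification locus on the component `Ṽ₋` of the fiber product of two copies of
the degree-`(n+1)` local model cover force `z₁ = z₂`. -/
theorem stmt_14 (n : ℕ) (hn : 0 < n) (z₁ z₂ : ℂ)
    (h1 : z₂ * ∑ i ∈ Finset.range n, z₁ ^ (n - 1 - i) * z₂ ^ i = (n : ℂ) * z₁ ^ n)
    (h2 : z₁ ^ n - z₂ ^ n + z₂ * ∑ i ∈ Finset.range n, z₁ ^ (n - 1 - i) * z₂ ^ i
        = (n : ℂ) * z₂ ^ n) :
    z₁ = z₂ := by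
  set S := ∑ i ∈ Finset.range n, z₁ ^ (n - 1 - i) * z₂ ^ i with hS
  have hpow : z₁ ^ n = z₂ ^ n := by
    have hn1 : ((n : ℂ) + 1) ≠ 0 := Nat.cast_add_one_ne_zero n
    have key : ((n : ℂ) + 1) * z₁ ^ n = ((n : ℂ) + 1) * z₂ ^ n := by
      rw [h1] at h2; ring_nf; ring_nf at h2; linear_combination h2
    exact mul_left_cancel₀ hn1 key
  have hgeom : S * (z₂ - z₁) = z₂ ^ n - z₁ ^ n := by
    have := geom_sum₂_mul z₂ z₁ n
    rw [hS]
    rw [← this]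
    congr 1
    exact Finset.sum_congr rfl fun i _ => mul_comm _ _
  rw [hpow, sub_self] at hgeom
  rcases mul_eq_zero.mp hgeom with hS0 | hz
  · rw [hS0, mul_zero] at h1
    have hz1 : z₁ = 0 := by
      have := h1.symm
      have hnne : (n:ℂ) ≠ 0 := Nat.cast_ne_zero.mpr hn.ne'
      have : z₁ ^ n = 0 := (mul_eq_zero.mp this).resolve_left hnne
      exact pow_eq_zero_iff hn.ne' |>.mp this
    have hz2 : z₂ = 0 := by
      have : z₂ ^ n = 0 := by rw [← hpow, hz1, zero_pow hn.ne']
      exact pow_eq_zero_iff hn.ne' |>.mp this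
    rw [hz1, hz2]
  · exact (sub_eq_zero.mp hz).symm
end

section
/- Let n be a positive integer and let t, λ ∈ ℂ satisfy t^(n+1) = (n+1)·t − n, λⁿ = 1, and t·∑_{i=0}^{n−1} (λ·t)^i = n. Then λ = 1. -/
/-!
Multiplying `t · ∑_{i<n} (λt)^i = n` by `λt - 1` telescopes the sum; since `(λt)^n = t^n`
this gives `t^(n+1) - t = n(λt - 1)`. Comparing with `t^(n+1) = (n+1)t - n` leaves
`n t = n λ t`, and `t ≠ 0` because the left side of the sum equation would otherwise vanish.
-/

open Finset

section

variable {R : Type*} [CommRing R] {n : ℕ} {t lam : R}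

theorem pow_succ_sub_self_eq_of_mul_geom_sum_eq (hlam : lam ^ n = 1)
    (he : t * ∑ i ∈ range n, (lam * t) ^ i = n) :
    t ^ (n + 1) - t = n * (lam * t - 1) :=
  calc t ^ (n + 1) - t = t * ((lam * t) ^ n - 1) := by rw [mul_pow, hlam]; ring
    _ = (lam * t - 1) * (t * ∑ i ∈ range n, (lam * t) ^ i) := by rw [← mul_geom_sum]; ring
    _ = n * (lam * t - 1) := by rw [he]; ring

theorem eq_one_of_pow_succ_eq_of_mul_geom_sum_eq [IsDomain R] (hn : (n : R) ≠ 0)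
    (ht : t ^ (n + 1) = (n + 1) * t - n) (hlam : lam ^ n = 1)
    (he : t * ∑ i ∈ range n, (lam * t) ^ i = n) :
    lam = 1 := by
  have ht0 : t ≠ 0 := by
    rintro rfl
    exact hn (by simpa using he.symm)
  have hsub := pow_succ_sub_self_eq_of_mul_geom_sum_eq hlam he
  rw [ht] at hsub
  have hzero : (n : R) * t * (lam - 1) = 0 := by linear_combination -hsub
  exact sub_eq_zero.mp ((mul_eq_zero.mp hzero).resolve_left (mul_ne_zero hn ht0))

end

/-- If `t^(n+1) = (n+1)·t − n`, `λⁿ = 1` and `t·∑_{i<n} (λ·t)^i = n` for a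
positive integer `n`, then `λ = 1`. -/
theorem stmt_15 (n : ℕ) (hn : 0 < n) (t lam : ℂ)
    (ht : t ^ (n + 1) = ((n : ℂ) + 1) * t - (n : ℂ))
    (hlam : lam ^ n = 1)
    (he : t * ∑ i ∈ Finset.range n, (lam * t) ^ i = (n : ℂ)) :
    lam = 1 :=
  eq_one_of_pow_succ_eq_of_mul_geom_sum_eq (Nat.cast_ne_zero.mpr hn.ne') ht hlam he
end
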